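/- Let R be a commutative ring with 1 and τ a refinable symmetric relation on R#. If every τ-factorization of every nonunit can be τ-refined to a τ-complete factorization (R is τ-completable), then R is τ-unrefinably atomicable: every τ-factorization can be τ-refined to a factorization all of whose factors are τ-unrefinably irreducible. -/

import Mathlib

variable {R : Type*} [CommRing R]

/-- A τ-factorization of `a`: `a = u * (a₁ ⋯ aₙ)` with `u` a unit, each factor a
nonunit, and distinct factors pairwise τ-related. -/
def IsTauFact (τ : R → R → Prop) (a : R) (l : List R) : Prop :=
  l ≠ [] ∧ (∀ b ∈ l, ¬ IsUnit b) ∧ l.Pairwise τ ∧ ∃ u : Rˣ, a = u * l.prod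

/-- `l'` is obtained from `l` by replacing each entry by a τ-factorization of it. -/
def IsRefinement (τ : R → R → Prop) (l l' : List R) : Prop :=
  ∃ L : List (List R), List.Forall₂ (IsTauFact τ) l L ∧ l' = L.flatten

/-- A τ-complete factorization: a τ-factorization admitting no strictly longer
τ-refinement which is itself a τ-factorization. -/
def IsTauComplete (τ : R → R → Prop) (a : R) (l : List R) : Prop :=
  IsTauFact τ a l ∧
    ∀ l', IsRefinement τ l l' → IsTauFact τ a l' → l'.length ≤ l.length

/-- τ is refinable: every τ-refinement of a τ-factorization is a τ-factorization. -/
def Refinable (τ : R → R → Prop) : Prop :=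
  ∀ (a : R) (l l' : List R), IsTauFact τ a l → IsRefinement τ l l' → IsTauFact τ a l'

/-- τ-unrefinably irreducible: a nonunit with only trivial τ-factorizations. -/
def UnrefIrred (τ : R → R → Prop) (a : R) : Prop :=
  ¬ IsUnit a ∧ ∀ l, IsTauFact τ a l → l.length = 1

section Refinement

variable {τ : R → R → Prop}

theorem IsTauFact.singleton {x : R} (hx : ¬ IsUnit x) : IsTauFact τ x [x] :=
  ⟨List.cons_ne_nil _ _, by simpa using hx, List.pairwise_singleton _ _, 1, by simp⟩

theorem forall₂_isTauFact_map_singleton {l : List R} (hl : ∀ x ∈ l, ¬ IsUnit x) :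
    List.Forall₂ (IsTauFact τ) l (l.map fun x => [x]) :=
  List.forall₂_map_right_iff.2 <| List.forall₂_same.2 fun _ hx => IsTauFact.singleton (hl _ hx)

theorem IsRefinement.replace {s t m : List R} {b : R} (hs : ∀ x ∈ s, ¬ IsUnit x)
    (ht : ∀ x ∈ t, ¬ IsUnit x) (hm : IsTauFact τ b m) :
    IsRefinement τ (s ++ b :: t) (s ++ m ++ t) := by
  refine ⟨s.map (fun x => [x]) ++ m :: t.map (fun x => [x]),
    List.rel_append (forall₂_isTauFact_map_singleton hs)
      (.cons hm (forall₂_isTauFact_map_singleton ht)), ?_⟩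
  have flatten_map_singleton : ∀ u : List R, (u.map fun x => [x]).flatten = u := by
    intro u; induction u <;> simp [*]
  simp [flatten_map_singleton]

theorem IsTauFact.length_pos {a : R} {l : List R} (hl : IsTauFact τ a l) : 0 < l.length :=
  List.length_pos_iff.2 hl.1

/-- Refining one factor into a longer τ-factorization would, by refinability, give a
longer τ-refinement of the whole factorization. -/
theorem IsTauComplete.unrefIrred_of_mem (href : Refinable τ) {a b : R} {l : List R}
    (hl : IsTauComplete τ a l) (hb : b ∈ l) : UnrefIrred τ b := by
  have hnu := hl.1.2.1
  refine ⟨hnu b hb, fun m hm => ?_⟩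
  obtain ⟨s, t, rfl⟩ := List.append_of_mem hb
  have hrefn : IsRefinement τ (s ++ b :: t) (s ++ m ++ t) :=
    .replace (fun x hx => hnu x (by simp [hx])) (fun x hx => hnu x (by simp [hx])) hm
  have hle := hl.2 _ hrefn (href a _ _ hl.1 hrefn)
  have hpos := hm.length_pos
  simp only [List.length_append, List.length_cons] at hle
  omega

end Refinement

theorem stmt10_general (τ : R → R → Prop) (href : Refinable τ)
    (h : ∀ (a : R) (l : List R), IsTauFact τ a l →
      ∃ l', IsRefinement τ l l' ∧ IsTauComplete τ a l') :
    ∀ (a : R) (l : List R), IsTauFact τ a l →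
      ∃ l', IsRefinement τ l l' ∧ IsTauFact τ a l' ∧
        ∀ b ∈ l', UnrefIrred τ b := by
  intro a l hl
  obtain ⟨l', hrefine, hcomp⟩ := h a l hl
  exact ⟨l', hrefine, hcomp.1, fun _ hb => hcomp.unrefIrred_of_mem href hb⟩

theorem stmt10 (τ : R → R → Prop) (hsym : Symmetric τ) (href : Refinable τ)
    (h : ∀ (a : R) (l : List R), IsTauFact τ a l →
      ∃ l', IsRefinement τ l l' ∧ IsTauComplete τ a l') :
    ∀ (a : R) (l : List R), IsTauFact τ a l →
      ∃ l', IsRefinement τ l l' ∧ IsTauFact τ a l' ∧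
        ∀ b ∈ l', UnrefIrred τ b :=
  stmt10_general τ href h
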